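/- Let A be a finite-dimensional non-nilpotent Leibniz algebra over an infinite field. Then Nil(A) is a generalized Frattini ideal of A if and only if Nil(A) = Rad(A), where Rad(A) is the maximal solvable ideal of A. -/

import Mathlib

namespace Leib

variable (F : Type*) [Field F] {A : Type*} [NonUnitalNonAssocRing A]
  [Module F A] [SMulCommClass F A A] [IsScalarTower F A A]

/-- `S` is a subalgebra: a submodule closed under multiplication. -/
def IsSubalg (S : Submodule F A) : Prop := ∀ x ∈ S, ∀ y ∈ S, x * y ∈ S

/-- `S` is a (two-sided) ideal of the Leibniz algebra `A`. -/
def IsIdeal (S : Submodule F A) : Prop := ∀ a : A, ∀ s ∈ S, a * s ∈ S ∧ s * a ∈ S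

/-- The normalizer `N_A(C)` of a subspace `C` in `A`. -/
def normalizer (C : Submodule F A) : Submodule F A where
  carrier := {a | ∀ c ∈ C, a * c ∈ C ∧ c * a ∈ C}
  zero_mem' := by intro c hc; simp [C.zero_mem]
  add_mem' := by
    intro a b ha hb c hc
    exact ⟨by rw [add_mul]; exact C.add_mem (ha c hc).1 (hb c hc).1,
           by rw [mul_add]; exact C.add_mem (ha c hc).2 (hb c hc).2⟩
  smul_mem' := by
    intro r a ha c hc
    exact ⟨by rw [smul_mul_assoc]; exact C.smul_mem r (ha c hc).1,
           by rw [mul_smul_comm]; exact C.smul_mem r (ha c hc).2⟩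

/-- The span of all products `s * t` with `s ∈ S`, `t ∈ T`. -/
def mulSpan (S T : Submodule F A) : Submodule F A :=
  Submodule.span F {x | ∃ s ∈ S, ∃ t ∈ T, x = s * t}

/-- The (left-normed) lower central series of a subspace `S`:
`S, S·S, S·(S·S), …`. -/
def lcs (S : Submodule F A) : ℕ → Submodule F A
  | 0 => S
  | n + 1 => mulSpan F S (lcs S n)

/-- `S` is nilpotent. -/
def IsNilp (S : Submodule F A) : Prop := ∃ n, lcs F S n = ⊥

/-- The derived series of a subspace `S`. -/
def derSeries (S : Submodule F A) : ℕ → Submodule F A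
  | 0 => S
  | n + 1 => mulSpan F (derSeries S n) (derSeries S n)

/-- `S` is solvable. -/
def IsSolv (S : Submodule F A) : Prop := ∃ n, derSeries F S n = ⊥

/-- `C` is a Cartan subalgebra of the subalgebra `K`: a nilpotent subalgebra of `K`
that is self-normalizing in `K`. -/
def IsCartanOf (K C : Submodule F A) : Prop :=
  C ≤ K ∧ IsSubalg F C ∧ IsNilp F C ∧ normalizer F C ⊓ K = C

/-- `H` is a generalized Frattini ideal (Cartan-subalgebra definition): `H` is proper and
whenever `A = H + N_A(C)` for `C` a Cartan subalgebra of an ideal `K` of `A`,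
it follows that `A = N_A(C)`. -/
def GenFrattiniC (H : Submodule F A) : Prop :=
  H ≠ ⊤ ∧ ∀ K C : Submodule F A, IsIdeal F K → IsCartanOf F K C →
    H ⊔ normalizer F C = ⊤ → normalizer F C = ⊤

/-- `H` is a generalized Frattini ideal (nilpotency characterization): `H` is proper and
every ideal `J ⊇ H` with `J/H` nilpotent is nilpotent. -/
def GenFrattiniN (H : Submodule F A) : Prop :=
  H ≠ ⊤ ∧ ∀ J : Submodule F A, IsIdeal F J → H ≤ J →
    (∃ n, lcs F J n ≤ H) → IsNilp F J

/-- The center `Z(A)`. -/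
def center : Submodule F A where
  carrier := {z | ∀ a : A, z * a = 0 ∧ a * z = 0}
  zero_mem' := by intro a; simp
  add_mem' := by
    intro x y hx hy a
    exact ⟨by rw [add_mul, (hx a).1, (hy a).1, add_zero],
           by rw [mul_add, (hx a).2, (hy a).2, add_zero]⟩
  smul_mem' := by
    intro r x hx a
    exact ⟨by rw [smul_mul_assoc, (hx a).1, smul_zero],
           by rw [mul_smul_comm, (hx a).2, smul_zero]⟩

/-- `M` is a maximal subalgebra of `A`. -/
def IsMaxSubalg (M : Submodule F A) : Prop :=
  IsSubalg F M ∧ M ≠ ⊤ ∧ ∀ S : Submodule F A, IsSubalg F S → M < S → S = ⊤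

/-- `I` is a maximal ideal of `A`. -/
def IsMaxIdeal (I : Submodule F A) : Prop :=
  IsIdeal F I ∧ I ≠ ⊤ ∧ ∀ J : Submodule F A, IsIdeal F J → I < J → J = ⊤

/-- `K` is a primitive ideal: `Φ(A/K) = 0`, `A/K` has a unique minimal ideal, and
`dim (A/K) > 1`.  (Ideals and maximal subalgebras of `A/K` are stated via the
correspondence with ideals and maximal subalgebras of `A` containing `K`.) -/
def IsPrimitiveIdeal (K : Submodule F A) : Prop :=
  IsIdeal F K ∧
  (∀ J : Submodule F A, IsIdeal F J → K ≤ J →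
      (∀ M : Submodule F A, IsMaxSubalg F M → K ≤ M → J ≤ M) → J = K) ∧
  (∃! B : Submodule F A, IsIdeal F B ∧ K < B ∧
      ∀ B' : Submodule F A, IsIdeal F B' → K < B' → ¬ B' < B) ∧
  1 < Module.finrank F (A ⧸ K)

end Leib

/-! If `N` is generalized Frattini and contains every nilpotent ideal, it contains every solvable
ideal `I`: by induction on the derived length, `I·I ≤ N`, so `(I + N)/N` is abelian, hence `I + N`
is nilpotent and lies in `N`. Conversely, if `N = Rad(A)`, an ideal `J ⊇ N` with `J/N` nilpotent
is solvable, so `J ≤ Rad(A) = N`. -/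

namespace Leib

variable {F : Type*} [Field F] {A : Type*} [NonUnitalNonAssocRing A] [Module F A]

lemma mul_mem_mulSpan {S T : Submodule F A} {s t : A} (hs : s ∈ S) (ht : t ∈ T) :
    s * t ∈ mulSpan F S T :=
  Submodule.subset_span ⟨s, hs, t, ht, rfl⟩

lemma mulSpan_le {S T U : Submodule F A} (h : ∀ s ∈ S, ∀ t ∈ T, s * t ∈ U) :
    mulSpan F S T ≤ U := by
  refine Submodule.span_le.2 ?_
  rintro x ⟨s, hs, t, ht, rfl⟩
  exact h s hs t ht

lemma mulSpan_mono {S T S' T' : Submodule F A} (hS : S ≤ S') (hT : T ≤ T') :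
    mulSpan F S T ≤ mulSpan F S' T' :=
  mulSpan_le fun _ hs _ ht => mul_mem_mulSpan (hS hs) (hT ht)

lemma IsIdeal.isSubalg {I : Submodule F A} (hI : IsIdeal F I) : IsSubalg F I :=
  fun _ _ y hy => (hI _ y hy).1

lemma IsIdeal.sup {I J : Submodule F A} (hI : IsIdeal F I) (hJ : IsIdeal F J) :
    IsIdeal F (I ⊔ J) := by
  intro a s hs
  obtain ⟨x, hx, y, hy, rfl⟩ := Submodule.mem_sup.1 hs
  rw [mul_add, add_mul]
  exact ⟨Submodule.add_mem_sup (hI a x hx).1 (hJ a y hy).1,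
    Submodule.add_mem_sup (hI a x hx).2 (hJ a y hy).2⟩

/-- The Leibniz identity, read as `a(st) = (as)t + s(at)` and as `(st)a = s(ta) - t(sa)`, keeps
`I·I` stable under multiplication by `A` on either side. -/
lemma IsIdeal.mulSpan_self [SMulCommClass F A A] [IsScalarTower F A A]
    (leib : ∀ a b c : A, a * (b * c) = a * b * c + b * (a * c))
    {I : Submodule F A} (hI : IsIdeal F I) : IsIdeal F (mulSpan F I I) := by
  intro a x hx
  constructor
  · induction hx using Submodule.span_induction with
    | mem x hx =>
      obtain ⟨s, hs, t, ht, rfl⟩ := hx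
      rw [leib a s t]
      exact add_mem (mul_mem_mulSpan (hI a s hs).1 ht) (mul_mem_mulSpan hs (hI a t ht).1)
    | zero => simp
    | add x y _ _ hx hy => rw [mul_add]; exact add_mem hx hy
    | smul r x _ hx => rw [mul_smul_comm]; exact Submodule.smul_mem _ r hx
  · induction hx using Submodule.span_induction with
    | mem x hx =>
      obtain ⟨s, hs, t, ht, rfl⟩ := hx
      rw [eq_sub_of_add_eq (leib s t a).symm]
      exact sub_mem (mul_mem_mulSpan hs (hI a t ht).2) (mul_mem_mulSpan ht (hI a s hs).2)
    | zero => simp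
    | add x y _ _ hx hy => rw [add_mul]; exact add_mem hx hy
    | smul r x _ hx => rw [smul_mul_assoc]; exact Submodule.smul_mem _ r hx

lemma mulSpan_sup_self_le {S H : Submodule F A} (hH : IsIdeal F H) :
    mulSpan F (S ⊔ H) (S ⊔ H) ≤ mulSpan F S S ⊔ H := by
  refine mulSpan_le fun s hs t ht => ?_
  obtain ⟨x, hx, n, hn, rfl⟩ := Submodule.mem_sup.1 hs
  obtain ⟨y, hy, m, hm, rfl⟩ := Submodule.mem_sup.1 ht
  rw [add_mul, mul_add, mul_add, add_assoc]
  exact Submodule.add_mem_sup (mul_mem_mulSpan hx hy)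
    (add_mem (hH x m hm).1 (add_mem (hH y n hn).2 (hH n m hm).1))

lemma derSeries_mono {S T : Submodule F A} (h : S ≤ T) (k : ℕ) :
    derSeries F S k ≤ derSeries F T k := by
  induction k with
  | zero => exact h
  | succ k ih => exact mulSpan_mono ih ih

lemma derSeries_add (S : Submodule F A) (m n : ℕ) :
    derSeries F S (m + n) = derSeries F (derSeries F S m) n := by
  induction n with
  | zero => rfl
  | succ n ih => exact congrArg₂ (mulSpan F) ih ih

lemma IsSubalg.derSeries_le_self {S : Submodule F A} (hS : IsSubalg F S) (k : ℕ) :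
    derSeries F S k ≤ S := by
  induction k with
  | zero => exact le_rfl
  | succ k ih => exact (mulSpan_mono ih ih).trans (mulSpan_le hS)

lemma IsSubalg.derSeries_le_lcs {S : Submodule F A} (hS : IsSubalg F S) (k : ℕ) :
    derSeries F S k ≤ lcs F S k := by
  induction k with
  | zero => exact le_rfl
  | succ k ih => exact mulSpan_mono (hS.derSeries_le_self k) ih

lemma IsSubalg.isSolv_of_lcs_le {S T : Submodule F A} (hS : IsSubalg F S) {n : ℕ}
    (hST : lcs F S n ≤ T) (hT : IsSolv F T) : IsSolv F S := by
  obtain ⟨m, hm⟩ := hT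
  refine ⟨n + m, le_bot_iff.1 ?_⟩
  rw [derSeries_add, ← hm]
  exact derSeries_mono ((hS.derSeries_le_lcs n).trans hST) m

lemma IsSubalg.isSolv_of_isNilp {S : Submodule F A} (hS : IsSubalg F S) (h : IsNilp F S) :
    IsSolv F S :=
  let ⟨_, hn⟩ := h
  hS.isSolv_of_lcs_le hn.le ⟨0, rfl⟩

lemma GenFrattiniN.le_of_mulSpan_self_le {H I : Submodule F A} (hH : GenFrattiniN F H)
    (hHideal : IsIdeal F H) (hHmax : ∀ M : Submodule F A, IsIdeal F M → IsNilp F M → M ≤ H)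
    (hI : IsIdeal F I) (hII : mulSpan F I I ≤ H) : I ≤ H := by
  have habelian : lcs F (I ⊔ H) 1 ≤ H :=
    (mulSpan_sup_self_le hHideal).trans (sup_le hII le_rfl)
  have hnilp : IsNilp F (I ⊔ H) := hH.2 _ (hI.sup hHideal) le_sup_right ⟨1, habelian⟩
  exact le_sup_left.trans (hHmax _ (hI.sup hHideal) hnilp)

lemma GenFrattiniN.le_of_isSolv [SMulCommClass F A A] [IsScalarTower F A A]
    (leib : ∀ a b c : A, a * (b * c) = a * b * c + b * (a * c))
    {H I : Submodule F A} (hH : GenFrattiniN F H) (hHideal : IsIdeal F H)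
    (hHmax : ∀ M : Submodule F A, IsIdeal F M → IsNilp F M → M ≤ H)
    (hI : IsIdeal F I) (hIsolv : IsSolv F I) : I ≤ H := by
  obtain ⟨n, hn⟩ := hIsolv
  induction n generalizing I with
  | zero => exact hn.le.trans bot_le
  | succ n ih =>
    rw [Nat.add_comm, derSeries_add] at hn
    exact hH.le_of_mulSpan_self_le hHideal hHmax hI (ih (hI.mulSpan_self leib) hn)

end Leib

open Leib in
theorem nil_genFrattini_iff_eq_rad_general
    {F : Type*} [Field F] {A : Type*} [NonUnitalNonAssocRing A]
    [Module F A] [SMulCommClass F A A] [IsScalarTower F A A]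
    (leib : ∀ a b c : A, a * (b * c) = a * b * c + b * (a * c))
    (hAnotnilp : ¬ IsNilp F (⊤ : Submodule F A))
    (N : Submodule F A) (hN : IsIdeal F N) (hNnilp : IsNilp F N)
    (hNmax : ∀ M : Submodule F A, IsIdeal F M → IsNilp F M → M ≤ N)
    (R : Submodule F A) (hR : IsIdeal F R) (hRsolv : IsSolv F R)
    (hRmax : ∀ S : Submodule F A, IsIdeal F S → IsSolv F S → S ≤ R) :
    GenFrattiniN F N ↔ N = R := by
  have hNsolv : IsSolv F N := hN.isSubalg.isSolv_of_isNilp hNnilp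
  have hNR : N ≤ R := hRmax N hN hNsolv
  constructor
  · intro hfrat
    exact hNR.antisymm (hfrat.le_of_isSolv leib hN hNmax hR hRsolv)
  · rintro rfl
    refine ⟨fun htop => hAnotnilp (htop ▸ hNnilp), fun J hJ hNJ ⟨_, hJN⟩ => ?_⟩
    have hJeq : J = N := (hRmax J hJ (hJ.isSubalg.isSolv_of_lcs_le hJN hNsolv)).antisymm hNJ
    exact hJeq ▸ hNnilp

open Leib in
/-- for a non-nilpotent `A`, `Nil(A)` is generalized Frattini iff
`Nil(A) = Rad(A)`. -/
theorem nil_genFrattini_iff_eq_rad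
    {F : Type*} [Field F] [Infinite F] {A : Type*} [NonUnitalNonAssocRing A]
    [Module F A] [SMulCommClass F A A] [IsScalarTower F A A] [Module.Finite F A]
    (leib : ∀ a b c : A, a * (b * c) = a * b * c + b * (a * c))
    (hAnotnilp : ¬ IsNilp F (⊤ : Submodule F A))
    (N : Submodule F A) (hN : IsIdeal F N) (hNnilp : IsNilp F N)
    (hNmax : ∀ M : Submodule F A, IsIdeal F M → IsNilp F M → M ≤ N)
    (R : Submodule F A) (hR : IsIdeal F R) (hRsolv : IsSolv F R)
    (hRmax : ∀ S : Submodule F A, IsIdeal F S → IsSolv F S → S ≤ R) :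
    GenFrattiniN F N ↔ N = R :=
  nil_genFrattini_iff_eq_rad_general leib hAnotnilp N hN hNnilp hNmax R hR hRsolv hRmax
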